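/- Let A be a symmetric bilinear form (Hessian of f) at a nondegenerate critical point of f : ℝⁿ → ℝ (with the Euclidean metric) of Morse index n (a local maximum). Then for small t < f(0), the level hypersurfaces {f = t} near 0 are spheres-like hypersurfaces whose mean curvature with respect to the downstream normal −grad f/‖grad f‖ is negative. Consequently, a strictly mean curvature convex function has no local maxima. -/

import Mathlib

/-!
At a regular point of `f`, with `ν = ∇f/‖∇f‖` and `B = D(∇f)`, the mean curvature of the level set
is `‖∇f‖⁻¹ (tr B - ⟪B ν, ν⟫)`: up to the positive factor, the trace of the Hessian on the tangent
space `ν^⊥`. At a nondegenerate maximum `x₀` the Hessian `A` is negative definite, so in dimension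
at least two `tr A - ⟪A w, w⟫ < 0` for every unit vector `w`. Compactness of the unit sphere and
continuity of `D(∇f)` make this persist, uniformly in `w`, near `x₀`; injectivity of `A` makes `x₀`
an isolated zero of `∇f`. Hence the mean curvature is negative on a punctured neighbourhood.
-/

open scoped RealInnerProductSpace
open Filter Topology Module

/-- Mean curvature of level hypersurfaces of `f` (divergence of the normalized
gradient; convex boundaries get positive mean curvature, and the coorientation
is by the downstream gradient `-∇f/‖∇f‖`). -/
noncomputable def meanCurv {F : Type*} [NormedAddCommGroup F] [InnerProductSpace ℝ F]
    [FiniteDimensional ℝ F] (f : F → ℝ) (x : F) : ℝ :=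
  ∑ i, inner ℝ (fderiv ℝ (fun y => ‖gradient f y‖⁻¹ • gradient f y) x (stdOrthonormalBasis ℝ F i)) (stdOrthonormalBasis ℝ F i)

section InnerProductSpace

variable {E : Type*} [NormedAddCommGroup E] [InnerProductSpace ℝ E]

theorem HasFDerivAt.norm_inv {G : Type*} [NormedAddCommGroup G] [NormedSpace ℝ G] {u : G → E}
    {B : G →L[ℝ] E} {x : G} (hu : HasFDerivAt u B x) (hx : u x ≠ 0) :
    HasFDerivAt (fun y => ‖u y‖⁻¹) (-(‖u x‖ ^ 3)⁻¹ • (innerSL ℝ (u x)).comp B) x := by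
  have hpos : 0 < ‖u x‖ := norm_pos_iff.mpr hx
  have hnorm : HasFDerivAt (fun y => ‖u y‖) (‖u x‖⁻¹ • (innerSL ℝ (u x)).comp B) x := by
    have h := hu.norm_sq.sqrt (by positivity)
    simp only [Real.sqrt_sq (norm_nonneg _)] at h
    refine h.congr_fderiv (ContinuousLinearMap.ext fun v => ?_)
    simp only [smul_apply, smul_eq_mul, nsmul_eq_mul, Nat.cast_ofNat]
    field_simp
  refine ((hasDerivAt_inv hpos.ne').comp_hasFDerivAt x hnorm).congr_fderiv
    (ContinuousLinearMap.ext fun v => ?_)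
  simp only [smul_apply, smul_eq_mul]
  field_simp

theorem inner_fderiv_gradient [CompleteSpace E] (f : E → ℝ) (x v w : E) :
    ⟪fderiv ℝ (gradient f) x v, w⟫ = fderiv ℝ (fderiv ℝ f) x v w := by
  have : gradient f = (InnerProductSpace.toDual ℝ E).symm ∘ fderiv ℝ f := rfl
  rw [this, LinearIsometryEquiv.comp_fderiv]
  exact InnerProductSpace.toDual_symm_apply

theorem ContDiff.gradient [CompleteSpace E] {n : WithTop ℕ∞} {f : E → ℝ}
    (hf : ContDiff ℝ (n + 1) f) : ContDiff ℝ n (gradient f) :=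
  (InnerProductSpace.toDual ℝ E).symm.contDiff.comp (hf.fderiv_right le_rfl)

variable [FiniteDimensional ℝ E]

theorem trace_fderiv_norm_inv_smul {u : E → E} {B : E →L[ℝ] E} {x : E} (hu : HasFDerivAt u B x)
    (hx : u x ≠ 0) :
    LinearMap.trace ℝ E (fderiv ℝ (fun y => ‖u y‖⁻¹ • u y) x) =
      ‖u x‖⁻¹ * (LinearMap.trace ℝ E B - ⟪B (‖u x‖⁻¹ • u x), ‖u x‖⁻¹ • u x⟫) := by
  have hpos : 0 < ‖u x‖ := norm_pos_iff.mpr hx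
  rw [((hu.norm_inv hx).fun_smul hu).fderiv]
  simp only [neg_smul, ContinuousLinearMap.toLinearMap_add, ContinuousLinearMap.toLinearMap_smul,
    ContinuousLinearMap.coe_smulRight, ContinuousLinearMap.toLinearMap_neg,
    ContinuousLinearMap.toLinearMap_comp, ContinuousLinearMap.toLinearMap_innerSL_apply, map_add,
    map_smul, smul_eq_mul, LinearMap.trace_smulRight, LinearMap.neg_apply, LinearMap.smul_apply,
    LinearMap.coe_comp, coe_innerₛₗ_apply, ContinuousLinearMap.coe_coe, Function.comp_apply,
    real_inner_smul_right, real_inner_comm (u x)]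
  field_simp
  ring

theorem meanCurv_eq_trace (f : E → ℝ) (x : E) :
    meanCurv f x =
      LinearMap.trace ℝ E (fderiv ℝ (fun y => ‖gradient f y‖⁻¹ • gradient f y) x) := by
  rw [meanCurv, LinearMap.trace_eq_sum_inner _ (stdOrthonormalBasis ℝ E)]
  exact Finset.sum_congr rfl fun i _ => real_inner_comm _ _

theorem LinearMap.trace_sub_inner_self_neg {A : E →ₗ[ℝ] E} (hA : ∀ v ≠ 0, ⟪A v, v⟫ < 0)
    (hE : 2 ≤ finrank ℝ E) {w : E} (hw : ‖w‖ = 1) : LinearMap.trace ℝ E A - ⟪A w, w⟫ < 0 := by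
  classical
  have hw' : Orthonormal ℝ ((↑) : ({w} : Set E) → E) := by
    simpa [orthonormal_subtype_iff_ite] using hw
  obtain ⟨u, b, hsub, hb⟩ := hw'.exists_orthonormalBasis_extension
  have hwu : w ∈ u := hsub rfl
  have htrace : LinearMap.trace ℝ E A = ∑ v ∈ u, ⟪A v, v⟫ := by
    rw [LinearMap.trace_eq_sum_inner A b, hb, ← Finset.sum_coe_sort u]
    exact Finset.sum_congr rfl fun v _ => real_inner_comm _ _
  have hcard : 1 < (u.erase w).card + 1 := by
    rw [Finset.card_erase_add_one hwu, ← finrank_eq_card_finset_basis b.toBasis]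
    omega
  rw [htrace, ← Finset.add_sum_erase u _ hwu, add_sub_cancel_left]
  refine Finset.sum_neg (fun v hv => hA v ?_) (Finset.card_pos.mp (by omega))
  have : ‖v‖ = 1 := by
    simpa [hb] using b.orthonormal.1 ⟨v, Finset.mem_of_mem_erase hv⟩
  exact norm_ne_zero_iff.mp (by rw [this]; exact one_ne_zero)

theorem eventually_forall_sphere_trace_sub_inner_self_neg {A : E →L[ℝ] E}
    (hA : ∀ v ≠ 0, ⟪A v, v⟫ < 0) (hE : 2 ≤ finrank ℝ E) :
    ∀ᶠ B : E →L[ℝ] E in 𝓝 A, ∀ w ∈ Metric.sphere (0 : E) 1,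
      LinearMap.trace ℝ E B - ⟪B w, w⟫ < 0 := by
  have htrace : Continuous fun B : E →L[ℝ] E => LinearMap.trace ℝ E B :=
    ((LinearMap.trace ℝ E).comp (ContinuousLinearMap.coeLM ℝ)).continuous_of_finiteDimensional
  have hcont : Continuous fun p : (E →L[ℝ] E) × E => LinearMap.trace ℝ E p.1 - ⟪p.1 p.2, p.2⟫ :=
    (htrace.comp continuous_fst).sub ((continuous_fst.clm_apply continuous_snd).inner continuous_snd)
  refine (isCompact_sphere 0 1).eventually_forall_of_forall_eventually fun w hw => ?_
  exact hcont.continuousAt.eventually_lt continuousAt_const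
    (LinearMap.trace_sub_inner_self_neg (A := (A : E →ₗ[ℝ] E)) hA hE (by simpa using hw))

theorem eventually_meanCurv_neg_of_hessian_neg (hE : 2 ≤ finrank ℝ E) {f : E → ℝ}
    (hf : ContDiff ℝ 2 f) {x₀ : E} (hcrit : gradient f x₀ = 0)
    (hneg : ∀ v ≠ 0, iteratedFDeriv ℝ 2 f x₀ ![v, v] < 0) :
    ∀ᶠ x in 𝓝[≠] x₀, gradient f x ≠ 0 ∧ meanCurv f x < 0 := by
  have hg : ContDiff ℝ 1 (gradient f) := hf.gradient
  set A := fderiv ℝ (gradient f) x₀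
  have hA : ∀ v ≠ 0, ⟪A v, v⟫ < 0 := fun v hv => by
    simpa [A, inner_fderiv_gradient, iteratedFDeriv_two_apply] using hneg v hv
  have hregular : ∀ᶠ x in 𝓝[≠] x₀, gradient f x ≠ 0 := by
    have hinj : Function.Injective (A : E →ₗ[ℝ] E) := by
      refine (injective_iff_map_eq_zero _).mpr fun v hv => not_not.mp fun hv0 => ?_
      rw [ContinuousLinearMap.coe_coe] at hv
      simpa [hv] using hA v hv0
    obtain ⟨K, -, hK⟩ := (A : E →ₗ[ℝ] E).injective_iff_antilipschitz.mp hinj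
    rw [← hcrit]
    exact (hg.differentiable one_ne_zero x₀).hasFDerivAt.eventually_ne ⟨K, hK⟩
  have hcurv : ∀ᶠ x in 𝓝 x₀, ∀ w ∈ Metric.sphere (0 : E) 1,
      LinearMap.trace ℝ E (fderiv ℝ (gradient f) x) - ⟪fderiv ℝ (gradient f) x w, w⟫ < 0 :=
    (hg.continuous_fderiv one_ne_zero).continuousAt.eventually
      (eventually_forall_sphere_trace_sub_inner_self_neg hA hE)
  filter_upwards [hregular, nhdsWithin_le_nhds hcurv] with x hx hxcurv
  refine ⟨hx, ?_⟩
  rw [meanCurv_eq_trace,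
    trace_fderiv_norm_inv_smul (hg.differentiable one_ne_zero x).hasFDerivAt hx]
  exact mul_neg_of_pos_of_neg (by positivity) (hxcurv _ (by simp [norm_smul, hx]))

end InnerProductSpace

/-- if `f : ℝⁿ → ℝ` is `C²` and `x₀` is a nondegenerate local
maximum (critical point with negative definite Hessian), then on a small
punctured ball around `x₀` the gradient is nonzero and the level hypersurfaces
of `f` have negative mean curvature with respect to the downstream normal
`-∇f/‖∇f‖`; consequently `f` is not strictly mean curvature convex, i.e. a
strictly mean curvature convex function has no nondegenerate local maxima. -/
theorem stmt6 {n : ℕ} (hn : 2 ≤ n) (f : EuclideanSpace ℝ (Fin n) → ℝ)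
    (hf : ContDiff ℝ 2 f)
    (x₀ : EuclideanSpace ℝ (Fin n)) (hcrit : gradient f x₀ = 0)
    (hneg : ∀ v : EuclideanSpace ℝ (Fin n), v ≠ 0 →
      iteratedFDeriv ℝ 2 f x₀ ![v, v] < 0) :
    (∃ δ > 0, ∀ x, dist x x₀ < δ → x ≠ x₀ →
        gradient f x ≠ 0 ∧ meanCurv f x < 0) ∧
    ¬ (∀ x, gradient f x ≠ 0 → 0 < meanCurv f x) := by
  have hE : 2 ≤ finrank ℝ (EuclideanSpace ℝ (Fin n)) := by simpa using hn
  have : Nontrivial (EuclideanSpace ℝ (Fin n)) :=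
    Module.nontrivial_of_finrank_pos (R := ℝ) (by omega)
  have hlocal := eventually_meanCurv_neg_of_hessian_neg hE hf hcrit hneg
  refine ⟨?_, fun hconvex => ?_⟩
  · obtain ⟨δ, hδ, hball⟩ := Metric.eventually_nhds_iff.mp (eventually_nhdsWithin_iff.mp hlocal)
    exact ⟨δ, hδ, fun x hx hne => hball hx hne⟩
  · obtain ⟨x, hx, hH⟩ := hlocal.exists
    exact (hconvex x hx).not_gt hH
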